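/- If a graphic sequence π is obtained from a graphic sequence π' by the Kleitman–Wang lay-off of a term d (i.e., π' arises from π by deleting a term d and subtracting 1 from d suitably chosen other terms), and π' is potentially F-graphic, then π is potentially F-graphic. -/

import Mathlib

/-!
Take a realization of the laid-off sequence that contains `F` and put the deleted vertex back,
joined to the `d i` vertices whose terms were lowered; the copy of `F` survives. Their degrees are
restored only if those terms were positive (otherwise the truncated subtraction in `kwReduce` lost
information). They are: in a realization of the nonincreasing sequence `d`, the vertices of
positive degree form an initial segment, and it contains the closed neighbourhood of `i`, which has
`d i + 1` elements.
-/

open SimpleGraph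
open scoped Classical

def IsGraphic {n : ℕ} (d : Fin n → ℕ) : Prop :=
  ∃ G : SimpleGraph (Fin n), ∀ v, G.degree v = d v

def Potentially {k n : ℕ} (F : SimpleGraph (Fin k)) (d : Fin n → ℕ) : Prop :=
  ∃ G : SimpleGraph (Fin n), (∀ v, G.degree v = d v) ∧
    ∃ f : F →g G, Function.Injective f

/-- The Kleitman–Wang lay-off of the term `d i` from a nonincreasing sequence:
delete the term at position `i` and subtract one from the `d i` largest
remaining terms (kept in order). -/
def kwReduce {n : ℕ} (d : Fin n → ℕ) (i : Fin n) : Fin (n - 1) → ℕ :=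
  fun j =>
    have hj : (j : ℕ) < n - 1 := j.isLt
    let idx : Fin n :=
      if (j : ℕ) < (i : ℕ) then ⟨(j : ℕ), by omega⟩ else ⟨(j : ℕ) + 1, by omega⟩
    if (j : ℕ) < d i then d idx - 1 else d idx

namespace SimpleGraph

variable {W : Type*}

def addVertex (G : SimpleGraph W) (s : Finset W) : SimpleGraph (Option W) where
  Adj
    | some a, some b => G.Adj a b
    | none, some b => b ∈ s
    | some a, none => a ∈ s
    | none, none => False
  symm := ⟨by rintro (_ | a) (_ | b) h <;> simp_all [G.adj_comm]⟩
  loopless := ⟨by rintro (_ | a) h <;> simp_all⟩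

section addVertex

variable (G : SimpleGraph W) (s : Finset W)

@[simp] lemma addVertex_adj_some_some (a b : W) :
    (G.addVertex s).Adj (some a) (some b) ↔ G.Adj a b := Iff.rfl
@[simp] lemma addVertex_adj_none_some (b : W) : (G.addVertex s).Adj none (some b) ↔ b ∈ s :=
  Iff.rfl
@[simp] lemma addVertex_adj_some_none (a : W) : (G.addVertex s).Adj (some a) none ↔ a ∈ s :=
  Iff.rfl

def toAddVertex : G ↪g G.addVertex s := ⟨Function.Embedding.some, Iff.rfl⟩

variable [Fintype W]

lemma addVertex_degree_none : (G.addVertex s).degree none = s.card := by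
  have : (G.addVertex s).neighborFinset none = s.map .some := by ext (_ | b) <;> simp
  rw [← card_neighborFinset_eq_degree, this, Finset.card_map]

lemma addVertex_degree_some (a : W) :
    (G.addVertex s).degree (some a) = G.degree a + if a ∈ s then 1 else 0 := by
  rw [← card_neighborFinset_eq_degree, ← card_neighborFinset_eq_degree]
  split_ifs with ha
  · have : (G.addVertex s).neighborFinset (some a) = (G.neighborFinset a).insertNone := by
      ext (_ | b) <;> simp [ha]
    rw [this, Finset.card_insertNone]
  · have : (G.addVertex s).neighborFinset (some a) = (G.neighborFinset a).map .some := by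
      ext (_ | b) <;> simp [ha]
    rw [this, Finset.card_map, add_zero]

end addVertex

lemma degree_pos_of_val_le_degree {n : ℕ} {G : SimpleGraph (Fin n)}
    (hG : Antitone fun v ↦ G.degree v) {u v : Fin n} (hu : 0 < G.degree u)
    (hv : (v : ℕ) ≤ G.degree u) : 0 < G.degree v := by
  by_contra! hv₀
  have hlt : ∀ w, 0 < G.degree w → w < v := fun w hw ↦
    lt_of_not_ge fun hvw ↦ (hw.trans_le (hG hvw)).not_ge hv₀
  have hsub : insert u (G.neighborFinset u) ⊆ Finset.Iio v := by
    intro w hw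
    rw [Finset.mem_Iio]
    apply hlt
    rcases Finset.mem_insert.mp hw with rfl | hw
    · exact hu
    · exact G.degree_pos_iff_exists_adj w |>.mpr ⟨u, (G.mem_neighborFinset u w).mp hw |>.symm⟩
  have := Finset.card_le_card hsub
  rw [Finset.card_insert_of_notMem (G.notMem_neighborFinset_self u), card_neighborFinset_eq_degree,
    Fin.card_Iio] at this
  omega

end SimpleGraph

lemma kwReduce_succ {m : ℕ} (d : Fin (m + 1) → ℕ) (i : Fin (m + 1)) (j : Fin m) :
    kwReduce d i j = if (j : ℕ) < d i then d (i.succAbove j) - 1 else d (i.succAbove j) := by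
  simp only [kwReduce, Fin.succAbove, Fin.lt_def, Fin.val_castSucc]
  rfl

/-- if the graphic sequence `π'` arises from the graphic
sequence `π` by a Kleitman–Wang lay-off, and `π'` is potentially `F`-graphic,
then `π` is potentially `F`-graphic. -/
theorem stmt12 (n : ℕ) (d : Fin n → ℕ) (hd : Antitone d) (i : Fin n)
    (hg : IsGraphic d)
    (kF : ℕ) (F : SimpleGraph (Fin kF))
    (h : Potentially F (kwReduce d i)) :
    Potentially F d := by
  obtain ⟨m, rfl⟩ : ∃ m, n = m + 1 := ⟨n - 1, by have := i.pos; omega⟩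
  obtain ⟨G₀, hG₀⟩ := hg
  obtain ⟨G', hG', f, hf⟩ := h
  have hdi : d i ≤ m := by simpa [hG₀] using G₀.degree_lt_card_verts i
  have hpos (j : Fin m) (hj : (j : ℕ) < d i) : 0 < d (i.succAbove j) := by
    have hanti : Antitone fun v ↦ G₀.degree v := by simpa only [hG₀] using hd
    have hle : (i.succAbove j : ℕ) ≤ j + 1 := by unfold Fin.succAbove; split <;> simp
    simpa only [hG₀] using degree_pos_of_val_le_degree hanti (u := i)
      (by rw [hG₀]; omega) (by rw [hG₀]; omega)
  let s := Finset.univ.filter fun j : Fin m ↦ (j : ℕ) < d i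
  let e := Iso.comap (finSuccEquiv' i) (G'.addVertex s)
  refine ⟨(G'.addVertex s).comap (finSuccEquiv' i), fun v ↦ ?_, ?_⟩
  · rw [← e.degree_eq, Iso.comap_apply]
    refine Fin.succAboveCases i ?_ (fun j ↦ ?_) v
    · rw [finSuccEquiv'_at, addVertex_degree_none, Fin.card_filter_val_lt, min_eq_right hdi]
    · rw [finSuccEquiv'_succAbove, addVertex_degree_some, hG', kwReduce_succ]
      by_cases hj : (j : ℕ) < d i
      · simp [s, hj, Nat.sub_add_cancel (hpos j hj)]
      · simp [s, hj]
  · exact ⟨e.symm.toHom.comp ((G'.toAddVertex s).toHom.comp f),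
      e.symm.injective.comp ((G'.toAddVertex s).injective.comp hf)⟩
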